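/- (Marginal of the first component of the $q$-multinomial) Let $0<q<1$, $\theta_1,\ldots,\theta_k>0$, $n\in\mathbb{N}$, and let $f^B_{\mathcal X}$ be the $q$-multinomial probability function of the first kind. Then for every $x_1\in\{0,1,\ldots,n\}$, $\sum f^B_{\mathcal X}(x_1,x_2,\ldots,x_k) = \binom{n}{x_1}_q \frac{\theta_1^{x_1} q^{\binom{x_1}{2}}}{\prod_{i=1}^{n}(1+\theta_1 q^{i-1})}$, where the sum is over all $(x_2,\ldots,x_k)\in\mathbb{N}^{k-1}$ with $x_1+x_2+\cdots+x_k\le n$; i.e. $X_1$ is distributed according to the $q$-binomial distribution of the first kind with parameters $n,\theta_1$. -/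

import Mathlib

open scoped BigOperators

/-- The `q`-factorial `[n]_q! = ∏_{k=1}^n (1-q^k)/(1-q)`. -/
noncomputable def qFact (q : ℝ) (n : ℕ) : ℝ :=
  ∏ k ∈ Finset.range n, (1 - q ^ (k + 1)) / (1 - q)

/-- The `q`-binomial coefficient. -/
noncomputable def qBinom (q : ℝ) (n x : ℕ) : ℝ :=
  qFact q n / (qFact q x * qFact q (n - x))

/-- The `q`-multinomial coefficient. -/
noncomputable def qMultinomCoeff (q : ℝ) (n : ℕ) {k : ℕ} (x : Fin k → ℕ) : ℝ :=
  qFact q n / ((∏ j, qFact q (x j)) * qFact q (n - ∑ j, x j))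

/-- The `q`-multinomial probability function of the first kind. -/
noncomputable def qMultinomPF (q : ℝ) (n : ℕ) {k : ℕ} (θ : Fin k → ℝ) (x : Fin k → ℕ) : ℝ :=
  qMultinomCoeff q n x *
    ∏ j, (θ j ^ x j * q ^ (x j * (x j - 1) / 2) /
      ∏ i ∈ Finset.range (n - ∑ i ∈ Finset.univ.filter (· < j), x i), (1 + θ j * q ^ i))

/-!
Deleting the first coordinate `x₁` of a first-kind `q`-multinomial tuple factors its probability
as the first-kind `q`-binomial probability of `x₁` (parameters `n, θ₁`) times the first-kind
`q`-multinomial probability of the remaining coordinates, with `n - x₁` trials and parameters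
`θ₂, …, θₖ`. The latter sums to `1` over its support, by induction on the number of
components: each step is the same factorization followed by the `q`-binomial theorem
`∑ₓ [n choose x]_q θ^x q^(x(x-1)/2) = ∏_{i<n} (1 + θ q^i)`.
-/

open Finset

lemma qFact_zero (q : ℝ) : qFact q 0 = 1 := by
  simp [qFact]

lemma qFact_succ (q : ℝ) (n : ℕ) :
    qFact q (n + 1) = qFact q n * ((1 - q ^ (n + 1)) / (1 - q)) :=
  prod_range_succ _ n

lemma qNum_pos {q : ℝ} (hq0 : 0 < q) (hq1 : q < 1) (n : ℕ) : 0 < (1 - q ^ (n + 1)) / (1 - q) :=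
  div_pos (sub_pos.mpr (pow_lt_one₀ hq0.le hq1 n.succ_ne_zero)) (sub_pos.mpr hq1)

lemma qFact_pos {q : ℝ} (hq0 : 0 < q) (hq1 : q < 1) (n : ℕ) : 0 < qFact q n :=
  prod_pos fun k _ => qNum_pos hq0 hq1 k

lemma qBinom_zero_right {q : ℝ} (hq0 : 0 < q) (hq1 : q < 1) (n : ℕ) : qBinom q n 0 = 1 := by
  rw [qBinom, qFact_zero, Nat.sub_zero, one_mul, div_self (qFact_pos hq0 hq1 n).ne']

lemma qBinom_self {q : ℝ} (hq0 : 0 < q) (hq1 : q < 1) (n : ℕ) : qBinom q n n = 1 := by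
  rw [qBinom, Nat.sub_self, qFact_zero, mul_one, div_self (qFact_pos hq0 hq1 n).ne']

/-- `q`-Pascal rule, from `[n+1]_q = q^(k+1) [n-k]_q + [k+1]_q`. -/
lemma qBinom_succ_succ {q : ℝ} (hq0 : 0 < q) (hq1 : q < 1) {n k : ℕ} (hk : k < n) :
    qBinom q (n + 1) (k + 1) = q ^ (k + 1) * qBinom q n (k + 1) + qBinom q n k := by
  obtain ⟨r, rfl⟩ := Nat.exists_eq_add_of_lt hk
  have hqNum : (1 - q ^ (k + r + 1 + 1)) / (1 - q)
      = q ^ (k + 1) * ((1 - q ^ (r + 1)) / (1 - q)) + (1 - q ^ (k + 1)) / (1 - q) := by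
    rw [mul_div_assoc', ← add_div]
    ring
  have hsub₁ : k + r + 1 + 1 - (k + 1) = r + 1 := by omega
  have hsub₂ : k + r + 1 - (k + 1) = r := by omega
  have hsub₃ : k + r + 1 - k = r + 1 := by omega
  rw [qBinom, qBinom, qBinom, hsub₁, hsub₂, hsub₃, qFact_succ q (k + r + 1), qFact_succ q k,
    qFact_succ q r, hqNum]
  have := (qFact_pos hq0 hq1 k).ne'
  have := (qFact_pos hq0 hq1 r).ne'
  have := (sub_pos.mpr (pow_lt_one₀ hq0.le hq1 k.succ_ne_zero)).ne'
  have := (sub_pos.mpr (pow_lt_one₀ hq0.le hq1 r.succ_ne_zero)).ne'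
  have := (sub_pos.mpr hq1).ne'
  field_simp

/-- The `q`-binomial theorem (Cauchy). -/
theorem sum_qBinom_mul_pow {q : ℝ} (hq0 : 0 < q) (hq1 : q < 1) (n : ℕ) (θ : ℝ) :
    ∑ x ∈ range (n + 1), qBinom q n x * θ ^ x * q ^ (x * (x - 1) / 2)
      = ∏ i ∈ range n, (1 + θ * q ^ i) := by
  induction n generalizing θ with
  | zero => simp [qBinom_zero_right hq0 hq1]
  | succ n ih =>
    set U : ℕ → ℝ := fun x => qBinom q n x * (θ * q) ^ x * q ^ (x * (x - 1) / 2) with hU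
    have hpascal : ∀ k ∈ range n,
        qBinom q (n + 1) (k + 1) * θ ^ (k + 1) * q ^ ((k + 1) * (k + 1 - 1) / 2)
          = U (k + 1) + θ * U k := by
      intro k hk
      simp only [qBinom_succ_succ hq0 hq1 (mem_range.mp hk), hU, Nat.triangle_succ, pow_add,
        mul_pow]
      ring
    have hlast : qBinom q (n + 1) (n + 1) * θ ^ (n + 1) * q ^ ((n + 1) * (n + 1 - 1) / 2)
        = θ * U n := by
      rw [Nat.triangle_succ]
      simp only [hU, qBinom_self hq0 hq1, pow_add, mul_pow]
      ring
    have hU₀ : U 0 = 1 := by simp [hU, qBinom_zero_right hq0 hq1]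
    calc ∑ x ∈ range (n + 1 + 1), qBinom q (n + 1) x * θ ^ x * q ^ (x * (x - 1) / 2)
        = ∑ k ∈ range n, (U (k + 1) + θ * U k) + θ * U n + U 0 := by
          rw [sum_range_succ', sum_range_succ, sum_congr rfl hpascal, hlast, hU₀,
            qBinom_zero_right hq0 hq1]
          simp
      _ = (1 + θ) * ∑ x ∈ range (n + 1), U x := by
          rw [sum_add_distrib, ← mul_sum]
          linear_combination (sum_range_succ' U n).symm + θ * (sum_range_succ U n).symm
      _ = ∏ i ∈ range (n + 1), (1 + θ * q ^ i) := by
          rw [ih, prod_range_succ', pow_zero, mul_one, mul_comm]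
          exact congrArg (· * _) (prod_congr rfl fun i _ => by ring)

noncomputable def qBinomPF (q : ℝ) (n : ℕ) (θ : ℝ) (x : ℕ) : ℝ :=
  qBinom q n x * (θ ^ x * q ^ (x * (x - 1) / 2)) / ∏ i ∈ range n, (1 + θ * q ^ i)

theorem sum_qBinomPF {q : ℝ} (hq0 : 0 < q) (hq1 : q < 1) (n : ℕ) {θ : ℝ} (hθ : 0 < θ) :
    ∑ x ∈ range (n + 1), qBinomPF q n θ x = 1 := by
  have hprod : 0 < ∏ i ∈ range n, (1 + θ * q ^ i) := prod_pos fun i _ => by positivity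
  simp only [qBinomPF, ← sum_div, ← mul_assoc]
  rw [div_eq_one_iff_eq hprod.ne', sum_qBinom_mul_pow hq0 hq1]

def tuplesSumLe (k n : ℕ) : Finset (Fin k → ℕ) :=
  (Fintype.piFinset fun _ => range (n + 1)).filter fun y => ∑ j, y j ≤ n

lemma mem_tuplesSumLe {k n : ℕ} {y : Fin k → ℕ} :
    y ∈ tuplesSumLe k n ↔ ∑ j, y j ≤ n := by
  simp only [tuplesSumLe, mem_filter, Fintype.mem_piFinset, mem_range, and_iff_right_iff_imp]
  exact fun h j => Nat.lt_succ_of_le ((single_le_sum_of_canonicallyOrdered (mem_univ j)).trans h)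

lemma filter_cons_sum_le_eq_tuplesSumLe {m n a : ℕ} (ha : a ≤ n) :
    (Fintype.piFinset fun _ : Fin m => range (n + 1)).filter (fun y => a + ∑ j, y j ≤ n)
      = tuplesSumLe m (n - a) := by
  ext y
  rw [mem_tuplesSumLe, mem_filter, Fintype.mem_piFinset]
  constructor
  · rintro ⟨-, hy⟩
    omega
  · intro hy
    refine ⟨fun j => mem_range.mpr ?_, by omega⟩
    have := single_le_sum_of_canonicallyOrdered (f := y) (mem_univ j)
    omega

lemma sum_tuplesSumLe_succ {M : Type*} [AddCommMonoid M] (k n : ℕ)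
    (f : (Fin (k + 1) → ℕ) → M) :
    ∑ y ∈ tuplesSumLe (k + 1) n, f y
      = ∑ a ∈ range (n + 1), ∑ z ∈ tuplesSumLe k (n - a), f (Fin.cons a z) := by
  rw [sum_sigma']
  refine sum_bij' (fun y _ => ⟨y 0, Fin.tail y⟩) (fun p _ => Fin.cons p.1 p.2) ?_ ?_
    (fun y _ => Fin.cons_self_tail y) (fun p _ => by simp) (fun y _ => by rw [Fin.cons_self_tail])
  · intro y hy
    rw [mem_tuplesSumLe, Fin.sum_univ_succ] at hy
    simp only [mem_sigma, mem_range, mem_tuplesSumLe]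
    exact ⟨by omega, by simp only [Fin.tail]; omega⟩
  · rintro ⟨a, z⟩ hp
    rw [mem_sigma, mem_range, mem_tuplesSumLe] at hp
    rw [mem_tuplesSumLe, Fin.sum_cons]
    omega

lemma qMultinomCoeff_cons {q : ℝ} (hq0 : 0 < q) (hq1 : q < 1) {m : ℕ} (n a : ℕ)
    (y : Fin m → ℕ) :
    qMultinomCoeff q n (Fin.cons a y) = qBinom q n a * qMultinomCoeff q (n - a) y := by
  rw [qMultinomCoeff, qMultinomCoeff, qBinom, Fin.sum_cons, Fin.prod_univ_succ, ← Nat.sub_sub]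
  simp only [Fin.cons_zero, Fin.cons_succ]
  have := (qFact_pos hq0 hq1 a).ne'
  have := (qFact_pos hq0 hq1 (n - a)).ne'
  have := (qFact_pos hq0 hq1 (n - a - ∑ j, y j)).ne'
  have : ∏ j, qFact q (y j) ≠ 0 := prod_ne_zero_iff.mpr fun j _ => (qFact_pos hq0 hq1 (y j)).ne'
  field_simp

lemma sum_filter_lt_succ {M : Type*} [AddCommMonoid M] {m : ℕ} (f : Fin (m + 1) → M)
    (j : Fin m) :
    ∑ i ∈ univ.filter (· < j.succ), f i = f 0 + ∑ i ∈ univ.filter (· < j), f i.succ := by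
  rw [sum_filter, sum_filter, Fin.sum_univ_succ]
  simp

lemma qMultinomPF_cons {q : ℝ} (hq0 : 0 < q) (hq1 : q < 1) {m : ℕ} (θ : Fin (m + 1) → ℝ)
    (n a : ℕ) (y : Fin m → ℕ) :
    qMultinomPF q n θ (Fin.cons a y)
      = qBinomPF q n (θ 0) a * qMultinomPF q (n - a) (Fin.tail θ) y := by
  rw [qMultinomPF, qMultinomPF, qMultinomCoeff_cons hq0 hq1, Fin.prod_univ_succ,
    filter_false_of_mem fun i _ => Fin.not_lt_zero i, sum_empty, Nat.sub_zero]
  simp only [sum_filter_lt_succ, Fin.cons_zero, Fin.cons_succ, ← Nat.sub_sub, Fin.tail, qBinomPF]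
  ring

theorem sum_qMultinomPF {q : ℝ} (hq0 : 0 < q) (hq1 : q < 1) (k n : ℕ) (θ : Fin k → ℝ)
    (hθ : ∀ j, 0 < θ j) : ∑ y ∈ tuplesSumLe k n, qMultinomPF q n θ y = 1 := by
  induction k generalizing n with
  | zero => simp [tuplesSumLe, qMultinomPF, qMultinomCoeff, (qFact_pos hq0 hq1 n).ne']
  | succ k ih =>
    calc ∑ y ∈ tuplesSumLe (k + 1) n, qMultinomPF q n θ y
        = ∑ a ∈ range (n + 1), qBinomPF q n (θ 0) a *
            ∑ z ∈ tuplesSumLe k (n - a), qMultinomPF q (n - a) (Fin.tail θ) z := by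
          simp only [sum_tuplesSumLe_succ, qMultinomPF_cons hq0 hq1, mul_sum]
      _ = 1 := by
          simp only [ih _ (Fin.tail θ) (fun j => hθ j.succ), mul_one,
            sum_qBinomPF hq0 hq1 n (hθ 0)]

/-- **Marginal of the first component of the q-multinomial** (with `k = m+1 ≥ 1`
components): summing the joint p.f. over the last `m` coordinates gives the
`q`-binomial distribution of the first kind with parameters `n, θ₁`. -/
theorem qMultinomial_first_marginal (q : ℝ) (hq0 : 0 < q) (hq1 : q < 1)
    (m : ℕ) (θ : Fin (m + 1) → ℝ) (hθ : ∀ j, 0 < θ j) (n : ℕ)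
    (x₁ : ℕ) (hx₁ : x₁ ≤ n) :
    ∑ y ∈ (Fintype.piFinset fun _ : Fin m => Finset.range (n + 1)).filter
        (fun y => x₁ + ∑ j, y j ≤ n),
      qMultinomPF q n θ (Fin.cons x₁ y) =
      qBinom q n x₁ * (θ 0 ^ x₁ * q ^ (x₁ * (x₁ - 1) / 2)) /
        ∏ i ∈ Finset.range n, (1 + θ 0 * q ^ i) := by
  rw [filter_cons_sum_le_eq_tuplesSumLe hx₁]
  simp only [qMultinomPF_cons hq0 hq1, ← mul_sum]
  rw [sum_qMultinomPF hq0 hq1 m (n - x₁) (Fin.tail θ) (fun j => hθ j.succ), mul_one, qBinomPF]
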